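/- (Sufficiency direction) If f : [0,∞) → [0,∞) is nondecreasing and concave, then for all 0 ≤ a₁ ≤ ⋯ ≤ aₙ and 0 ≤ b₁ ≤ ⋯ ≤ bₙ with a₁ + ⋯ + aₖ ≤ b₁ + ⋯ + bₖ for every k ≤ n, one has f(a₁) + ⋯ + f(aₖ) ≤ f(b₁) + ⋯ + f(bₖ) for every k ≤ n. -/

import Mathlib

/-!
Write `f (b i) - f (a i) = sᵢ (b i - a i)` with `sᵢ` the slope of `f` between `a i` and `b i`.
By concavity the slopes decrease along the indices where `a i ≠ b i` (both endpoints of the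
secant move right), and they are nonnegative since `f` is nondecreasing; Abel summation against
the nonnegative partial sums of `b - a` then gives `∑ sᵢ (b i - a i) ≥ 0`.
-/

open Finset

section AbelSummation

variable {R : Type*} [CommRing R] [LinearOrder R] [IsStrictOrderedRing R]

lemma mul_sum_range_le_sum_range_mul {s d : ℕ → R} {k : ℕ}
    (hs : ∀ i j, i ≤ j → j < k → d i ≠ 0 → d j ≠ 0 → s j ≤ s i)
    (hd : ∀ j ≤ k, 0 ≤ ∑ i ∈ range j, d i) {c : R} (hc : 0 ≤ c)
    (hcs : ∀ i < k, d i ≠ 0 → c ≤ s i) :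
    c * ∑ i ∈ range k, d i ≤ ∑ i ∈ range k, s i * d i := by
  induction k generalizing c with
  | zero => simp
  | succ k ih =>
    have hs' : ∀ i j, i ≤ j → j < k → d i ≠ 0 → d j ≠ 0 → s j ≤ s i :=
      fun i j hij hj ↦ hs i j hij (hj.trans k.lt_succ_self)
    have hd' : ∀ j ≤ k, 0 ≤ ∑ i ∈ range j, d i := fun j hj ↦ hd j (hj.trans k.le_succ)
    have hD : 0 ≤ ∑ i ∈ range (k + 1), d i := hd (k + 1) le_rfl
    simp only [sum_range_succ] at hD ⊢
    by_cases hdk : d k = 0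
    · simpa [hdk] using ih hs' hd' hc fun i hi ↦ hcs i (hi.trans k.lt_succ_self)
    · have hcsk : c ≤ s k := hcs k k.lt_succ_self hdk
      have hprev := ih hs' hd' (hc.trans hcsk)
        fun i hi hdi ↦ hs i k hi.le k.lt_succ_self hdi hdk
      nlinarith [mul_nonneg (sub_nonneg.mpr hcsk) hD]

lemma sum_range_mul_nonneg {s d : ℕ → R} {k : ℕ}
    (hs : ∀ i j, i ≤ j → j < k → d i ≠ 0 → d j ≠ 0 → s j ≤ s i)
    (hs0 : ∀ i < k, d i ≠ 0 → 0 ≤ s i) (hd : ∀ j ≤ k, 0 ≤ ∑ i ∈ range j, d i) :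
    0 ≤ ∑ i ∈ range k, s i * d i := by
  simpa using mul_sum_range_le_sum_range_mul hs hd le_rfl hs0

end AbelSummation

lemma slope_eq_slope_min_max {𝕜 : Type*} [Field 𝕜] [LinearOrder 𝕜] (f : 𝕜 → 𝕜) (x y : 𝕜) :
    slope f x y = slope f (min x y) (max x y) := by
  rcases le_total x y with h | h <;> simp [h, slope_comm]

section Slope

variable {𝕜 : Type*} [Field 𝕜] [LinearOrder 𝕜] [IsStrictOrderedRing 𝕜] {s : Set 𝕜} {f : 𝕜 → 𝕜}

lemma ConcaveOn.slope_anti_of_le_of_lt (hf : ConcaveOn 𝕜 s f) {x y x' y' : 𝕜}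
    (hx : x ∈ s) (hy : y ∈ s) (hx' : x' ∈ s) (hy' : y' ∈ s) (hxx' : x ≤ x') (hyy' : y ≤ y')
    (hxy : x < y) (hxy' : x' < y') :
    slope f x' y' ≤ slope f x y :=
  calc slope f x' y' = slope f y' x' := slope_comm f x' y'
    _ ≤ slope f y' x := hf.slope_anti hy' ⟨hx, (hxy.trans_le hyy').ne⟩ ⟨hx', hxy'.ne⟩ hxx'
    _ = slope f x y' := slope_comm f y' x
    _ ≤ slope f x y := hf.slope_anti hx ⟨hy, hxy.ne'⟩ ⟨hy', (hxy.trans_le hyy').ne'⟩ hyy'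

lemma ConcaveOn.slope_anti_of_le (hf : ConcaveOn 𝕜 s f) {x y x' y' : 𝕜}
    (hx : x ∈ s) (hy : y ∈ s) (hx' : x' ∈ s) (hy' : y' ∈ s) (hxx' : x ≤ x') (hyy' : y ≤ y')
    (hxy : x ≠ y) (hxy' : x' ≠ y') :
    slope f x' y' ≤ slope f x y := by
  rw [slope_eq_slope_min_max f x, slope_eq_slope_min_max f x']
  exact hf.slope_anti_of_le_of_lt (min_rec' _ hx hy) (max_rec' _ hx hy) (min_rec' _ hx' hy')
    (max_rec' _ hx' hy') (min_le_min hxx' hyy') (max_le_max hxx' hyy') (min_lt_max.mpr hxy)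
    (min_lt_max.mpr hxy')

end Slope

theorem concave_preserves_majorization (f : ℝ → ℝ)
    (hmono : MonotoneOn f (Set.Ici (0 : ℝ)))
    (hconc : ConcaveOn ℝ (Set.Ici (0 : ℝ)) f)
    (n : ℕ) (a b : ℕ → ℝ)
    (ha0 : ∀ i, i < n → 0 ≤ a i) (hb0 : ∀ i, i < n → 0 ≤ b i)
    (hamono : ∀ i, i + 1 < n → a i ≤ a (i + 1))
    (hbmono : ∀ i, i + 1 < n → b i ≤ b (i + 1))
    (hsum : ∀ k, k ≤ n → ∑ i ∈ Finset.range k, a i ≤ ∑ i ∈ Finset.range k, b i) :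
    ∀ k, k ≤ n → ∑ i ∈ Finset.range k, f (a i) ≤ ∑ i ∈ Finset.range k, f (b i) := by
  intro k hk
  have ha : MonotoneOn a (Set.Iio n) :=
    monotoneOn_of_le_add_one Set.ordConnected_Iio fun i _ _ hi ↦ hamono i hi
  have hb : MonotoneOn b (Set.Iio n) :=
    monotoneOn_of_le_add_one Set.ordConnected_Iio fun i _ _ hi ↦ hbmono i hi
  suffices 0 ≤ ∑ i ∈ range k, slope f (a i) (b i) * (b i - a i) by
    rw [← sub_nonneg, ← sum_sub_distrib]
    simpa only [mul_comm (slope f _ _), ← smul_eq_mul, sub_smul_slope, vsub_eq_sub] using this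
  refine sum_range_mul_nonneg (fun i j hij hj hi hj' ↦ ?_)
    (fun i hi _ ↦ hmono.slope_nonneg (ha0 i (hi.trans_le hk)) (hb0 i (hi.trans_le hk)))
    (fun j hj ↦ by simpa [sum_sub_distrib] using hsum j (hj.trans hk))
  have hjn : j < n := hj.trans_le hk
  have hin : i < n := hij.trans_lt hjn
  exact hconc.slope_anti_of_le (ha0 i hin) (hb0 i hin) (ha0 j hjn) (hb0 j hjn)
    (ha hin hjn hij) (hb hin hjn hij) (sub_ne_zero.mp hi).symm (sub_ne_zero.mp hj').symm
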